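/- Let 0 < α < 1 and λ = π(1−α)/2. Then a function f ∈ ℋ₀ belongs to SS_H(α) if and only if f belongs to both SP_H(λ) and SP_H(−λ). -/

import Mathlib

open Metric Set

/-- The Wirtinger derivative `f_z = (f_x - i f_y)/2`. -/
noncomputable def wirtZ (f : ℂ → ℂ) (z : ℂ) : ℂ :=
  (fderiv ℝ f z 1 - Complex.I * fderiv ℝ f z Complex.I) / 2

/-- The Wirtinger derivative `f_z̄ = (f_x + i f_y)/2`. -/
noncomputable def wirtZbar (f : ℂ → ℂ) (z : ℂ) : ℂ :=
  (fderiv ℝ f z 1 + Complex.I * fderiv ℝ f z Complex.I) / 2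

/-- The Jacobian `J_f = |f_z|² - |f_z̄|²`. -/
noncomputable def Jac (f : ℂ → ℂ) (z : ℂ) : ℝ :=
  ‖wirtZ f z‖ ^ 2 - ‖wirtZbar f z‖ ^ 2

/-- The operator `Df(z) = z f_z(z) - z̄ f_z̄(z)`. -/
noncomputable def Dop (f : ℂ → ℂ) (z : ℂ) : ℂ :=
  z * wirtZ f z - (starRingEnd ℂ) z * wirtZbar f z

/-- The λ-spiral segment `[0,w]_λ = {w exp(t e^{iλ}) : t ≤ 0} ∪ {0}`. -/
def spiralSegment (l : ℝ) (w : ℂ) : Set ℂ :=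
  insert 0 {u : ℂ | ∃ t : ℝ, t ≤ 0 ∧ u = w * Complex.exp (t * Complex.exp (Complex.I * l))}

/-- A set `Ω` is λ-spirallike if it contains `[0,w]_λ` for each `w ∈ Ω`. -/
def IsSpirallike (l : ℝ) (Ω : Set ℂ) : Prop :=
  ∀ w ∈ Ω, spiralSegment l w ⊆ Ω

/-- `V_α = {0} ∪ {w ≠ 0 : |w| < exp(-tan(πα/2)·|Arg w|)}`. -/
def Vset (α : ℝ) : Set ℂ :=
  insert 0 {w : ℂ | w ≠ 0 ∧
    ‖w‖ < Real.exp (-(Real.tan (Real.pi * α / 2)) * |Complex.arg w|)}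

/-- A set `Ω` is strongly starlike of order `α` if `w₀ • V_α ⊆ Ω` for each `w₀ ∈ Ω`. -/
def StronglyStarlike (α : ℝ) (Ω : Set ℂ) : Prop :=
  ∀ w₀ ∈ Ω, ∀ v ∈ Vset α, w₀ * v ∈ Ω

/-- The class ℋ₀ of harmonic `f` on `𝔻` with `f(0)=0`, `f_z(0)=1`, described via the
decomposition `f = h + conj g` with `h, g` analytic, `h(0)=g(0)=0`, `h'(0)=1`. -/
def InH0 (f : ℂ → ℂ) : Prop :=
  ∃ h g : ℂ → ℂ, DifferentiableOn ℂ h (ball 0 1) ∧ DifferentiableOn ℂ g (ball 0 1) ∧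
    h 0 = 0 ∧ g 0 = 0 ∧ deriv h 0 = 1 ∧ ∀ z ∈ ball (0:ℂ) 1, f z = h z + (starRingEnd ℂ) (g z)

/-- Hereditarily λ-spirallike harmonic functions. -/
def InSPH (l : ℝ) (f : ℂ → ℂ) : Prop :=
  InH0 f ∧ (∀ z ∈ ball (0:ℂ) 1, 0 < Jac f z) ∧ Set.InjOn f (ball 0 1) ∧
    ∀ r : ℝ, 0 < r → r < 1 → IsSpirallike l (f '' ball 0 r)

/-- Hereditarily strongly starlike harmonic functions of order `α`. -/
def InSSH (α : ℝ) (f : ℂ → ℂ) : Prop :=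
  InH0 f ∧ (∀ z ∈ ball (0:ℂ) 1, 0 < Jac f z) ∧ Set.InjOn f (ball 0 1) ∧
    ∀ r : ℝ, 0 < r → r < 1 → StronglyStarlike α (f '' ball 0 r)

open Complex


lemma arg_exp_abs_le (y : ℝ) : |Complex.arg (Complex.exp (y * Complex.I))| ≤ |y| := by
  set θ := Complex.arg (Complex.exp (y * Complex.I)) with hθ
  have habs : ‖Complex.exp (y * Complex.I)‖ = 1 := by
    simp [Complex.norm_exp]
  have hexp : Complex.exp ((θ:ℂ) * Complex.I) = Complex.exp (y * Complex.I) := by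
    have := Complex.norm_mul_exp_arg_mul_I (Complex.exp (y * Complex.I))
    rw [habs] at this
    simpa using this
  rw [Complex.exp_eq_exp_iff_exists_int] at hexp
  obtain ⟨n, hn⟩ := hexp
  have hy : θ = y + n * (2 * Real.pi) := by
    have him := congrArg Complex.im hn
    simpa [Complex.mul_im, Complex.mul_re] using him
  have hθpi : |θ| ≤ Real.pi := Complex.abs_arg_le_pi _
  rcases eq_or_ne n 0 with h0 | h0
  · rw [h0] at hy; simp at hy; rw [hy]
  · have h1 : (1:ℝ) ≤ |(n:ℝ)| := by
      have : (1:ℤ) ≤ |n| := Int.one_le_abs h0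
      exact_mod_cast this
    have hpi := Real.pi_pos
    have hkey : |(n:ℝ)| * (2 * Real.pi) ≤ |θ| + |y| := by
      have : (n:ℝ) * (2 * Real.pi) = θ + (-y) := by rw [hy]; ring
      calc |(n:ℝ)| * (2 * Real.pi) = |(n:ℝ) * (2 * Real.pi)| := by
            rw [abs_mul, abs_of_pos (by positivity : (0:ℝ) < 2 * Real.pi)]
        _ = |θ + (-y)| := by rw [this]
        _ ≤ |θ| + |(-y)| := abs_add_le _ _
        _ = |θ| + |y| := by rw [abs_neg]
    nlinarith

lemma exp_spiral (t l : ℝ) : Complex.exp (↑t * Complex.exp (Complex.I * ↑l)) =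
    ↑(Real.exp (t * Real.cos l)) * Complex.exp (↑(t * Real.sin l) * Complex.I) := by
  have h1 : (↑t : ℂ) * Complex.exp (Complex.I * ↑l) =
      ↑(t * Real.cos l) + ↑(t * Real.sin l) * Complex.I := by
    rw [mul_comm Complex.I (↑l : ℂ), Complex.exp_mul_I]
    push_cast [← Complex.ofReal_cos, ← Complex.ofReal_sin]
    ring
  rw [h1, Complex.exp_add, Complex.ofReal_exp]

lemma spirallike_of_open_ss (α l : ℝ) (hτ : 0 ≤ Real.tan (Real.pi * α / 2))
    (hl : Real.cos l = Real.tan (Real.pi * α / 2) * |Real.sin l|)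
    (Ω : Set ℂ) (hO : IsOpen Ω) (hSS : StronglyStarlike α Ω) : IsSpirallike l Ω := by
  intro w hw u hu
  rcases hu with hu0 | ⟨t, ht, rfl⟩
  · -- u = 0
    have := hSS w hw 0 (Set.mem_insert 0 _)
    rw [mul_zero] at this
    rwa [hu0]
  · rcases eq_or_ne w 0 with rfl | hw0
    · simpa using hw
    · obtain ⟨ε, hε, hball⟩ := Metric.isOpen_iff.1 hO w hw
      set δ : ℝ := ε / (2 * ‖w‖) with hδ
      have habsw : 0 < ‖w‖ := by
        simpa [norm_pos_iff] using hw0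
      have hδpos : 0 < δ := by positivity
      have hw' : ((1 + δ : ℝ) : ℂ) * w ∈ Ω := by
        apply hball
        rw [Metric.mem_ball, dist_eq]
        have : ((1 + δ : ℝ) : ℂ) * w - w = (δ : ℝ) * w := by push_cast; ring
        rw [this, norm_mul, Complex.norm_real, Real.norm_eq_abs, abs_of_pos hδpos]
        rw [hδ]
        rw [div_mul_eq_mul_div]
        rw [div_lt_iff₀ (by positivity)]
        nlinarith
      clear hδ hball
      clear_value δ
      set v : ℂ := Complex.exp (↑t * Complex.exp (Complex.I * ↑l)) / ((1 + δ : ℝ) : ℂ) with hv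
      have h1δ : (0:ℝ) < 1 + δ := by linarith
      have hveq : v = ↑(Real.exp (t * Real.cos l) / (1 + δ)) *
          Complex.exp (↑(t * Real.sin l) * Complex.I) := by
        rw [hv, exp_spiral]
        push_cast
        ring
      have hvabs : ‖v‖ = Real.exp (t * Real.cos l) / (1 + δ) := by
        rw [hveq, norm_mul, Complex.norm_real, Real.norm_eq_abs, Complex.norm_exp]
        simp [abs_of_pos (by positivity : (0:ℝ) < Real.exp (t * Real.cos l) / (1+δ))]
      have hvarg : Complex.arg v = Complex.arg (Complex.exp (↑(t * Real.sin l) * Complex.I)) := by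
        rw [hveq]
        exact Complex.arg_real_mul _ (by positivity)
      have hvmem : v ∈ Vset α := by
        right
        constructor
        · rw [hv]
          apply div_ne_zero (Complex.exp_ne_zero _)
          exact_mod_cast h1δ.ne'
        · rw [hvabs, hvarg]
          have harg := arg_exp_abs_le (t * Real.sin l)
          have h2 : Real.tan (Real.pi * α / 2) * |Complex.arg (Complex.exp (↑(t * Real.sin l) * Complex.I))|
              ≤ Real.tan (Real.pi * α / 2) * |t * Real.sin l| := by
            exact mul_le_mul_of_nonneg_left harg hτ
          have h3 : Real.tan (Real.pi * α / 2) * |t * Real.sin l| = - (t * Real.cos l) := by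
            rw [abs_mul, abs_of_nonpos ht, hl]; ring
          have h4 : t * Real.cos l ≤ -(Real.tan (Real.pi * α / 2) *
              |Complex.arg (Complex.exp (↑(t * Real.sin l) * Complex.I))|) := by linarith
          calc Real.exp (t * Real.cos l) / (1 + δ) < Real.exp (t * Real.cos l) := by
                rw [div_lt_iff₀ h1δ]; nlinarith [Real.exp_pos (t * Real.cos l)]
            _ ≤ Real.exp (-(Real.tan (Real.pi * α / 2) *
                |Complex.arg (Complex.exp (↑(t * Real.sin l) * Complex.I))|)) :=
                Real.exp_le_exp.2 h4
            _ = _ := by ring_nf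
      have := hSS _ hw' v hvmem
      have heq : ((1 + δ : ℝ) : ℂ) * w * v = w * Complex.exp (↑t * Complex.exp (Complex.I * ↑l)) := by
        have hne : ((1 + δ : ℝ) : ℂ) ≠ 0 := by exact_mod_cast h1δ.ne'
        rw [hv]
        calc ((1 + δ : ℝ) : ℂ) * w * (Complex.exp (↑t * Complex.exp (Complex.I * ↑l)) / ((1 + δ : ℝ) : ℂ))
            = (w * Complex.exp (↑t * Complex.exp (Complex.I * ↑l))) * (((1 + δ : ℝ) : ℂ) / ((1 + δ : ℝ) : ℂ)) := by ring
          _ = _ := by rw [div_self hne, mul_one]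
      rwa [heq] at this
lemma ss_of_spirallike (α : ℝ) (hα : 0 < α) (hα1 : α < 1) (Ω : Set ℂ)
    (h1 : IsSpirallike (Real.pi * (1 - α) / 2) Ω)
    (h2 : IsSpirallike (-(Real.pi * (1 - α) / 2)) Ω) : StronglyStarlike α Ω := by
  set lam : ℝ := Real.pi * (1 - α) / 2 with hlam
  have hpi := Real.pi_pos
  have hβ1 : 0 < Real.pi * α / 2 := by positivity
  have hβ2 : Real.pi * α / 2 < Real.pi / 2 := by nlinarith
  have hcosβ : 0 < Real.cos (Real.pi * α / 2) :=
    Real.cos_pos_of_mem_Ioo ⟨by linarith, hβ2⟩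
  have hsinβ : 0 < Real.sin (Real.pi * α / 2) :=
    Real.sin_pos_of_pos_of_lt_pi hβ1 (by linarith)
  have hlam2 : lam = Real.pi / 2 - Real.pi * α / 2 := by rw [hlam]; ring
  have hc : Real.cos lam = Real.sin (Real.pi * α / 2) := by
    rw [hlam2, Real.cos_pi_div_two_sub]
  have hs : Real.sin lam = Real.cos (Real.pi * α / 2) := by
    rw [hlam2, Real.sin_pi_div_two_sub]
  set τ : ℝ := Real.tan (Real.pi * α / 2) with hτdef
  have hτ : τ = Real.sin (Real.pi * α / 2) / Real.cos (Real.pi * α / 2) :=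
    Real.tan_eq_sin_div_cos _
  have hτpos : 0 < τ := by rw [hτ]; positivity
  have hcpos : 0 < Real.cos lam := by rw [hc]; exact hsinβ
  have hspos : 0 < Real.sin lam := by rw [hs]; exact hcosβ
  have hcτ : Real.cos lam = τ * Real.sin lam := by
    rw [hc, hs, hτ]; field_simp
  intro w hw v hv
  rcases hv with hv0 | ⟨hvne, habs⟩
  · rw [hv0, mul_zero]
    exact h1 w hw (Set.mem_insert 0 _)
  · set c := Real.cos lam
    set s := Real.sin lam
    set x : ℝ := Real.log ‖v‖ with hx
    set y : ℝ := Complex.arg v with hy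
    have habspos : 0 < ‖v‖ := by
      simpa [norm_pos_iff] using hvne
    have hxlt : x < -τ * |y| := by
      have := Real.log_lt_log habspos habs
      rwa [Real.log_exp] at this
    set t1 : ℝ := (x / c + y / s) / 2 with ht1def
    set t2 : ℝ := (x / c - y / s) / 2 with ht2def
    have hxs : x * s < -(c * |y|) := by
      have hts : τ * s = c := hcτ.symm
      have h7 : x * s < (-τ * |y|) * s := mul_lt_mul_of_pos_right hxlt hspos
      have h8 : (-τ * |y|) * s = -(c * |y|) := by rw [← hts]; ring
      linarith
    have ht1 : t1 ≤ 0 := by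
      rw [ht1def]
      have h5 : x / c + y / s ≤ 0 := by
        rw [div_add_div _ _ (ne_of_gt hcpos) (ne_of_gt hspos)]
        apply div_nonpos_of_nonpos_of_nonneg _ (by positivity)
        nlinarith [le_abs_self y]
      linarith
    have ht2 : t2 ≤ 0 := by
      rw [ht2def]
      have h5 : x / c - y / s ≤ 0 := by
        rw [div_sub_div _ _ (ne_of_gt hcpos) (ne_of_gt hspos)]
        apply div_nonpos_of_nonpos_of_nonneg _ (by positivity)
        nlinarith [neg_abs_le y]
      linarith
    have hre : (t1 + t2) * c = x := by
      rw [ht1def, ht2def]; field_simp; ring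
    have him : (t1 - t2) * s = y := by
      rw [ht1def, ht2def]; field_simp; ring
    have hE1 : Complex.exp (Complex.I * (lam:ℝ)) = (c:ℝ) + (s:ℝ) * Complex.I := by
      rw [mul_comm, Complex.exp_mul_I, ← Complex.ofReal_cos, ← Complex.ofReal_sin]
    have hE2 : Complex.exp (Complex.I * ((-lam:ℝ):ℝ)) = (c:ℝ) - (s:ℝ) * Complex.I := by
      rw [mul_comm, Complex.exp_mul_I, Complex.ofReal_neg, Complex.cos_neg, Complex.sin_neg,
        ← Complex.ofReal_cos, ← Complex.ofReal_sin]
      ring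
    have hkey : (t1:ℂ) * Complex.exp (Complex.I * (lam:ℝ)) +
        (t2:ℂ) * Complex.exp (Complex.I * ((-lam:ℝ):ℝ)) = (x:ℂ) + (y:ℂ) * Complex.I := by
      rw [hE1, hE2]
      have : (t1:ℂ) * ((c:ℝ) + (s:ℝ) * Complex.I) + (t2:ℂ) * ((c:ℝ) - (s:ℝ) * Complex.I)
          = (((t1+t2)*c : ℝ) : ℂ) + (((t1-t2)*s : ℝ) : ℂ) * Complex.I := by
        push_cast; ring
      rw [this, hre, him]
    have hvexp : v = Complex.exp ((x:ℂ) + (y:ℂ) * Complex.I) := by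
      have h6 := Complex.norm_mul_exp_arg_mul_I v
      rw [Complex.exp_add]
      have h7 : ((‖v‖ : ℝ) : ℂ) = Complex.exp (x:ℂ) := by
        rw [← Complex.ofReal_exp]
        norm_cast
        rw [hx, Real.exp_log habspos]
      rw [← h7]
      exact h6.symm
    have hu1 : w * Complex.exp ((t1:ℂ) * Complex.exp (Complex.I * (lam:ℝ))) ∈ Ω := by
      apply h1 w hw
      exact Set.mem_insert_iff.2 (Or.inr ⟨t1, ht1, rfl⟩)
    have hu2 := h2 _ hu1 (Set.mem_insert_iff.2 (Or.inr ⟨t2, ht2, rfl⟩))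
    have hfinal : w * Complex.exp ((t1:ℂ) * Complex.exp (Complex.I * (lam:ℝ))) *
        Complex.exp ((t2:ℂ) * Complex.exp (Complex.I * ((-lam : ℝ):ℝ))) = w * v := by
      rw [mul_assoc, ← Complex.exp_add, hkey, ← hvexp]
    rwa [hfinal] at hu2

lemma image_ball_isOpen (f : ℂ → ℂ) (hf : InH0 f)
    (hJ : ∀ z ∈ ball (0:ℂ) 1, 0 < Jac f z) (r : ℝ) (hr1 : r ≤ 1) :
    IsOpen (f '' ball 0 r) := by
  obtain ⟨h, g, hhd, hgd, -, -, -, hfeq⟩ := hf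
  rw [isOpen_iff_mem_nhds]
  rintro x ⟨z, hzr, rfl⟩
  have hz1 : z ∈ ball (0:ℂ) 1 :=
    mem_ball.2 (lt_of_lt_of_le (mem_ball.1 hzr) hr1)
  have hnhds1 : ball (0:ℂ) 1 ∈ nhds z := isOpen_ball.mem_nhds hz1
  have hEq : f =ᶠ[nhds z] fun w => h w + (starRingEnd ℂ) (g w) :=
    Filter.eventually_of_mem hnhds1 (fun w hw => hfeq w hw)
  have hha : AnalyticAt ℂ h z := hhd.analyticAt hnhds1
  have hga : AnalyticAt ℂ g z := hgd.analyticAt hnhds1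
  have hch : ContDiffAt ℝ 1 h z := hha.contDiffAt.restrict_scalars ℝ
  have hcg : ContDiffAt ℝ 1 (fun w => (starRingEnd ℂ) (g w)) z := by
    have hconj : ContDiff ℝ 1 (⇑(Complex.conjCLE)) := Complex.conjCLE.contDiff
    exact hconj.contDiffAt.comp z (hga.contDiffAt.restrict_scalars ℝ)
  have hcf : ContDiffAt ℝ 1 f z := (hch.add hcg).congr_of_eventuallyEq hEq
  have hstrict : HasStrictFDerivAt f (fderiv ℝ f z) z := hcf.hasStrictFDerivAt one_ne_zero
  set L := fderiv ℝ f z with hL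
  set a := wirtZ f z with ha
  set b := wirtZbar f z with hb
  have hJz : 0 < ‖a‖ ^ 2 - ‖b‖ ^ 2 := hJ z hz1
  have hLv : ∀ u : ℂ, L u = a * u + b * (starRingEnd ℂ) u := by
    intro u
    have hu' : (u.re : ℝ) • (1:ℂ) + (u.im : ℝ) • Complex.I = u := by
      simp [Complex.real_smul, Complex.re_add_im]
    rw [← hu', map_add, map_smul, map_smul]
    rw [ha, hb, wirtZ, wirtZbar, hL]
    simp only [Complex.real_smul, map_add, map_mul, Complex.conj_ofReal, Complex.conj_I,
      map_one, mul_one]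
    linear_combination ((u.im:ℂ) * (fderiv ℝ f z) Complex.I) * Complex.I_sq
  have habs_ab : ‖b‖ < ‖a‖ := by
    nlinarith [norm_nonneg a, norm_nonneg b]
  have hinj : Function.Injective L := by
    intro u1 u2 he
    by_contra hne
    have hsub : u1 - u2 ≠ 0 := sub_ne_zero.2 hne
    have h0 : L (u1 - u2) = 0 := by rw [map_sub, he, sub_self]
    rw [hLv] at h0
    have h1 : a * (u1 - u2) = -(b * (starRingEnd ℂ) (u1 - u2)) :=
      eq_neg_of_add_eq_zero_left h0
    have h2 : ‖a‖ * ‖u1 - u2‖ =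
        ‖b‖ * ‖u1 - u2‖ := by
      have := congrArg norm h1
      rwa [norm_mul, norm_neg, norm_mul, Complex.norm_conj] at this
    have h3 : 0 < ‖u1 - u2‖ := by
      simpa [norm_pos_iff] using hsub
    nlinarith
  have hsurj : Function.Surjective L :=
    LinearMap.injective_iff_surjective.1 (show Function.Injective L.toLinearMap from hinj)
  let e : ℂ ≃ₗ[ℝ] ℂ := LinearEquiv.ofBijective L.toLinearMap ⟨hinj, hsurj⟩
  let E : ℂ ≃L[ℝ] ℂ := e.toContinuousLinearEquiv
  have hEL : (E : ℂ →L[ℝ] ℂ) = L := by ext u; rfl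
  have hstrict' : HasStrictFDerivAt f ((E : ℂ →L[ℝ] ℂ)) z := by rw [hEL]; exact hstrict
  have hmap := hstrict'.map_nhds_eq_of_equiv
  rw [← hmap]
  exact Filter.image_mem_map (isOpen_ball.mem_nhds hzr)

/-- Relation (1.4): for `0 < α < 1` and `λ = π(1-α)/2`, a function `f ∈ ℋ₀` belongs to
`SS_H(α)` iff it belongs to both `SP_H(λ)` and `SP_H(-λ)`. -/
theorem stmt5 (α : ℝ) (hα : 0 < α) (hα1 : α < 1) (f : ℂ → ℂ) (hf : InH0 f) :
    InSSH α f ↔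
      InSPH (Real.pi * (1 - α) / 2) f ∧ InSPH (-(Real.pi * (1 - α) / 2)) f := by
  have hpi := Real.pi_pos
  have hβ1 : 0 < Real.pi * α / 2 := by positivity
  have hβ2 : Real.pi * α / 2 < Real.pi / 2 := by nlinarith
  have hcosβ : 0 < Real.cos (Real.pi * α / 2) :=
    Real.cos_pos_of_mem_Ioo ⟨by linarith, hβ2⟩
  have hsinβ : 0 < Real.sin (Real.pi * α / 2) :=
    Real.sin_pos_of_pos_of_lt_pi hβ1 (by linarith)
  have hτ0 : 0 ≤ Real.tan (Real.pi * α / 2) := by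
    rw [Real.tan_eq_sin_div_cos]; positivity
  have hlam2 : Real.pi * (1 - α) / 2 = Real.pi / 2 - Real.pi * α / 2 := by ring
  have hspos : 0 < Real.sin (Real.pi * (1 - α) / 2) := by
    rw [hlam2, Real.sin_pi_div_two_sub]; exact hcosβ
  have hl1 : Real.cos (Real.pi * (1 - α) / 2) =
      Real.tan (Real.pi * α / 2) * |Real.sin (Real.pi * (1 - α) / 2)| := by
    rw [abs_of_pos hspos, hlam2, Real.cos_pi_div_two_sub, Real.sin_pi_div_two_sub,
      Real.tan_eq_sin_div_cos]
    field_simp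
  have hl2 : Real.cos (-(Real.pi * (1 - α) / 2)) =
      Real.tan (Real.pi * α / 2) * |Real.sin (-(Real.pi * (1 - α) / 2))| := by
    rw [Real.cos_neg, Real.sin_neg, abs_neg]; exact hl1
  constructor
  · rintro ⟨hH0, hJ, hinj, hSS⟩
    refine ⟨⟨hH0, hJ, hinj, fun r hr0 hr1 => ?_⟩, ⟨hH0, hJ, hinj, fun r hr0 hr1 => ?_⟩⟩
    · exact spirallike_of_open_ss α _ hτ0 hl1 _
        (image_ball_isOpen f hH0 hJ r hr1.le) (hSS r hr0 hr1)
    · exact spirallike_of_open_ss α _ hτ0 hl2 _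
        (image_ball_isOpen f hH0 hJ r hr1.le) (hSS r hr0 hr1)
  · rintro ⟨⟨hH0, hJ, hinj, hSP1⟩, ⟨-, -, -, hSP2⟩⟩
    exact ⟨hH0, hJ, hinj, fun r hr0 hr1 =>
      ss_of_spirallike α hα hα1 _ (hSP1 r hr0 hr1) (hSP2 r hr0 hr1)⟩
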